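/- Let 𝔊₃ be the 7-dimensional real Lie algebra with basis (X₁,X₂,X₃,X₄,X₅,X,Y) and nonzero brackets [X₁,X₂]=X₄, [X₁,X₃]=X₅, [X,X₂]=X₂, [X,X₄]=X₄, [Y,X₃]=X₃, [Y,X₅]=X₅. For F ∈ 𝔊₃* with coordinates (α₁,α₂,α₃,α₄,α₅,α,β) in the dual basis, let B_F be the skew-symmetric bilinear form on 𝔊₃ defined by B_F(A,B) = ⟨F,[A,B]⟩. Then the rank of B_F equals 6 if and only if either (α₄ = 0 and α₂α₅ ≠ 0) or (α₄ ≠ 0 and (α₃ ≠ 0 or α₅ ≠ 0)); in particular the maximal possible rank of B_F over all F is 6. -/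

import Mathlib

/-! The Gram matrix of `B_F` is skew-symmetric of odd size, so its determinant vanishes and its
rank is at most 6. The principal 6 × 6 minors obtained by deleting the row and column of `X₃`,
`X₄`, `X₅` are `α₄⁴α₅²`, `α₂²α₅⁴`, `α₃²α₄⁴`; under the stated condition one of them is nonzero,
so the rank is 6. When the condition fails, three rows of the Gram matrix vanish, so the rank is
at most 4. -/

noncomputable section

/-- Half of the structure constants of the Lie algebra 𝔊₃: `g3half i j` is the
coordinate vector of `[Xᵢ, Xⱼ]` for the ordered pairs `(i,j)` listed in the paper
(indices `0,…,4` are `X₁,…,X₅`, index `5` is `X`, index `6` is `Y`). -/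
def g3half (i j : Fin 7) : Fin 7 → ℝ :=
  if i = 0 ∧ j = 1 then Pi.single 3 1      -- [X₁,X₂] = X₄
  else if i = 0 ∧ j = 2 then Pi.single 4 1 -- [X₁,X₃] = X₅
  else if i = 5 ∧ j = 1 then Pi.single 1 1 -- [X,X₂] = X₂
  else if i = 5 ∧ j = 3 then Pi.single 3 1 -- [X,X₄] = X₄
  else if i = 6 ∧ j = 2 then Pi.single 2 1 -- [Y,X₃] = X₃
  else if i = 6 ∧ j = 4 then Pi.single 4 1 -- [Y,X₅] = X₅
  else 0

/-- The bracket `[Xᵢ, Xⱼ]` (in coordinates) of basis vectors of 𝔊₃. -/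
def g3br (i j : Fin 7) : Fin 7 → ℝ := g3half i j - g3half j i

/-- The Gram matrix of the bilinear form `B_F(A,B) = ⟨F,[A,B]⟩` in the given basis,
where `α` is the coordinate vector of `F` in the dual basis. -/
def gramG3 (α : Fin 7 → ℝ) : Matrix (Fin 7) (Fin 7) ℝ :=
  Matrix.of fun i j => ∑ k, α k * g3br i j k

namespace Matrix

theorem det_eq_zero_of_transpose_eq_neg {n R : Type*} [Fintype n] [DecidableEq n] [CommRing R]
    [IsAddTorsionFree R] {A : Matrix n n R} (hA : Aᵀ = -A) (hn : Odd (Fintype.card n)) :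
    A.det = 0 :=
  self_eq_neg.mp <| by simpa [det_neg, hn.neg_one_pow] using congrArg det hA

theorem rank_lt_card_of_det_eq_zero {n K : Type*} [Fintype n] [DecidableEq n] [Field K]
    {A : Matrix n n K} (hA : A.det = 0) : A.rank < Fintype.card n := by
  refine A.rank_le_card_width.lt_of_ne fun h => ?_
  have hcols : LinearIndependent K A.col := by
    rw [linearIndependent_iff_card_eq_finrank_span, ← h, rank_eq_finrank_span_cols]
    rfl
  rw [linearIndependent_cols_iff_isUnit, isUnit_iff_isUnit_det, hA] at hcols
  exact not_isUnit_zero hcols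

theorem card_le_rank_of_det_submatrix_ne_zero {m n k R : Type*} [Fintype n] [Fintype k]
    [DecidableEq k] [CommRing R] [IsDomain R] (A : Matrix m n R) (r : k → m) (c : k → n)
    (h : (A.submatrix r c).det ≠ 0) : Fintype.card k ≤ A.rank :=
  (rank_of_det_ne_zero h).symm.le.trans (A.rank_submatrix_le r c)

theorem rank_le_card_sub_of_rows_eq_zero {m n R : Type*} [Fintype m] [Fintype n] [DecidableEq m]
    [CommSemiring R] [StrongRankCondition R] (A : Matrix m n R) (s : Finset m)
    (h : ∀ i ∈ s, A i = 0) : A.rank ≤ Fintype.card m - s.card := by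
  rw [← Finset.card_compl]
  refine A.rank_le_card_of_support_subset sᶜ fun i hi => ?_
  simp only [Finset.coe_compl, Set.mem_compl_iff, Finset.mem_coe]
  exact fun his => hi (h i his)

end Matrix

open Matrix

lemma gramG3_eq (α : Fin 7 → ℝ) :
    gramG3 α = !![0, α 3, α 4, 0, 0, 0, 0;
      -α 3, 0, 0, 0, 0, -α 1, 0;
      -α 4, 0, 0, 0, 0, 0, -α 2;
      0, 0, 0, 0, 0, -α 3, 0;
      0, 0, 0, 0, 0, 0, -α 4;
      0, α 1, 0, α 3, 0, 0, 0;
      0, 0, α 2, 0, α 4, 0, 0] := by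
  ext i j
  fin_cases i <;> fin_cases j <;> simp [gramG3, g3br, g3half, Fin.sum_univ_seven]

lemma transpose_gramG3 (α : Fin 7 → ℝ) : (gramG3 α)ᵀ = -gramG3 α := by
  ext i j
  rw [transpose_apply, neg_apply]
  simp only [gramG3, of_apply, g3br, Pi.sub_apply, ← Finset.sum_neg_distrib]
  exact Finset.sum_congr rfl fun k _ => by ring

lemma rank_gramG3_le_six (α : Fin 7 → ℝ) : (gramG3 α).rank ≤ 6 :=
  Nat.le_of_lt_succ <| by
    simpa using rank_lt_card_of_det_eq_zero <|
      det_eq_zero_of_transpose_eq_neg (transpose_gramG3 α) ⟨3, rfl⟩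

lemma det_gramG3_submatrix_succAbove_two (α : Fin 7 → ℝ) :
    ((gramG3 α).submatrix (Fin.succAbove 2) (Fin.succAbove 2)).det = α 3 ^ 4 * α 4 ^ 2 := by
  rw [gramG3_eq]
  simp [det_succ_row_zero, Fin.sum_univ_succ, Fin.succAbove]
  ring

lemma det_gramG3_submatrix_succAbove_three (α : Fin 7 → ℝ) :
    ((gramG3 α).submatrix (Fin.succAbove 3) (Fin.succAbove 3)).det = α 1 ^ 2 * α 4 ^ 4 := by
  rw [gramG3_eq]
  simp [det_succ_row_zero, Fin.sum_univ_succ, Fin.succAbove]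
  ring

lemma det_gramG3_submatrix_succAbove_four (α : Fin 7 → ℝ) :
    ((gramG3 α).submatrix (Fin.succAbove 4) (Fin.succAbove 4)).det = α 2 ^ 2 * α 3 ^ 4 := by
  rw [gramG3_eq]
  simp [det_succ_row_zero, Fin.sum_univ_succ, Fin.succAbove]
  ring

lemma six_le_rank_gramG3 {α : Fin 7 → ℝ}
    (h : (α 3 = 0 ∧ α 1 * α 4 ≠ 0) ∨ (α 3 ≠ 0 ∧ (α 2 ≠ 0 ∨ α 4 ≠ 0))) :
    6 ≤ (gramG3 α).rank := by
  obtain ⟨k, hk⟩ : ∃ k : Fin 7, ((gramG3 α).submatrix k.succAbove k.succAbove).det ≠ 0 := by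
    rcases h with ⟨-, h14⟩ | ⟨h3, h2 | h4⟩
    · obtain ⟨h1, h4⟩ := mul_ne_zero_iff.mp h14
      exact ⟨3, by simp [det_gramG3_submatrix_succAbove_three, h1, h4]⟩
    · exact ⟨4, by simp [det_gramG3_submatrix_succAbove_four, h2, h3]⟩
    · exact ⟨2, by simp [det_gramG3_submatrix_succAbove_two, h3, h4]⟩
  simpa using (gramG3 α).card_le_rank_of_det_submatrix_ne_zero _ _ hk

lemma rank_gramG3_le_four {α : Fin 7 → ℝ}
    (h : α 3 = 0 ∧ α 1 = 0 ∨ α 3 = 0 ∧ α 4 = 0 ∨ α 2 = 0 ∧ α 4 = 0) :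
    (gramG3 α).rank ≤ 4 := by
  obtain ⟨s, hs, hzero⟩ : ∃ s : Finset (Fin 7), s.card = 3 ∧ ∀ i ∈ s, gramG3 α i = 0 := by
    rcases h with ⟨h3, h1⟩ | ⟨h3, h4⟩ | ⟨h2, h4⟩ <;>
      [refine ⟨{1, 3, 5}, rfl, ?_⟩; refine ⟨{0, 3, 4}, rfl, ?_⟩; refine ⟨{2, 4, 6}, rfl, ?_⟩] <;>
      intro i hi <;> ext j <;> fin_cases hi <;> fin_cases j <;> simp [gramG3_eq, *]
  simpa [hs] using (gramG3 α).rank_le_card_sub_of_rows_eq_zero s hzero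

/-- For `F ∈ 𝔊₃*` with coordinates `(α₁,…,α₅,α,β)`, the rank of `B_F` is `6`
iff either (`α₄ = 0` and `α₂α₅ ≠ 0`) or (`α₄ ≠ 0` and (`α₃ ≠ 0` or `α₅ ≠ 0`));
in particular the maximal rank is `6`. -/
theorem rank_BF_G3 :
    (∀ α : Fin 7 → ℝ, (gramG3 α).rank ≤ 6) ∧
    (∀ α : Fin 7 → ℝ,
      (gramG3 α).rank = 6 ↔
        ((α 3 = 0 ∧ α 1 * α 4 ≠ 0) ∨ (α 3 ≠ 0 ∧ (α 2 ≠ 0 ∨ α 4 ≠ 0)))) := by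
  refine ⟨rank_gramG3_le_six, fun α => ⟨fun h6 => ?_, fun h => ?_⟩⟩
  · by_contra hc
    simp only [ne_eq, mul_eq_zero, not_or] at hc
    have := rank_gramG3_le_four (α := α) (by tauto)
    omega
  · exact (rank_gramG3_le_six α).antisymm (six_le_rank_gramG3 h)
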